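/- Let Q = ax²+bxy+cy² ∈ Q_F(1, d_K) and 𝔞 = O_F·ω_Q + O_F. Then a·𝔞·conj(𝔞) = O_K, where conj is complex conjugation on K. -/

import Mathlib

open NumberField Complex

noncomputable section

def iota (F K : Type) [Field F] [Field K] [NumberField F] [Algebra F K]
    (u : 𝓞 F) : K := algebraMap F K (u : F)

def IsFormN (F : Type) [Field F] [NumberField F] (τ : F →+* ℝ) (N : ℕ)
    (dK : 𝓞 F) (a b c : 𝓞 F) : Prop :=
  (∀ d : 𝓞 F, d ∣ a → d ∣ b → d ∣ c → IsUnit d) ∧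
  0 < τ (a : F) ∧
  b ^ 2 - 4 * a * c = dK ∧
  (∀ d : 𝓞 F, d ∣ a → d ∣ (N : 𝓞 F) → IsUnit d)

def IsFormRoot (F K : Type) [Field F] [Field K] [NumberField F] [Algebra F K]
    (σ : K →+* ℂ) (a b c : 𝓞 F) (ω : K) : Prop :=
  iota F K a * ω ^ 2 + iota F K b * ω + iota F K c = 0 ∧ 0 < (σ ω).im

/-! The roots `ω` and `conj ω` of `a X² + b X + c` are distinct, since `ω ∉ F` and `[K : F] = 2`,
so `a (ω + conj ω) = -b` and `a ω conj ω = c`. Every product `a x y` with `x ∈ 𝔞`, `y ∈ conj 𝔞`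
is then an `O_F`-combination of the integers `c`, `a ω`, `a conj ω`, `a`, giving
`a 𝔞 conj(𝔞) ⊆ O_K`. Conversely the product contains `a`, `c = a ω conj ω` and
`b = -(a ω + a conj ω)`, and as `O_F` is a PID, primitivity of `Q` writes `1` as an
`O_F`-combination of `a, b, c`. -/

theorem IsIntegral.of_sq_add_mul_add_eq_zero {R A : Type*} [CommRing R] [CommRing A]
    [Algebra R A] {x p q : A} (hp : IsIntegral R p) (hq : IsIntegral R q)
    (h : x ^ 2 + p * x + q = 0) : IsIntegral R x := by
  have hx : IsIntegral (integralClosure R A) x :=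
    ⟨.X ^ 2 + .C ⟨p, hp⟩ * .X + .C ⟨q, hq⟩, by monicity!, by simpa using h⟩
  exact isIntegral_trans x hx

/-- With `αx + αy = -β` and `αx · αy = αγ`, the element `αx` is a root of `X² + βX + αγ`. -/
theorem IsIntegral.mul_of_vieta {R A : Type*} [CommRing R] [CommRing A] [Algebra R A]
    {α β γ x y : A} (hα : IsIntegral R α) (hβ : IsIntegral R β) (hγ : IsIntegral R γ)
    (hsum : α * (x + y) = -β) (hprod : α * (x * y) = γ) : IsIntegral R (α * x) :=
  .of_sq_add_mul_add_eq_zero hβ (hα.mul hγ) (by linear_combination α * x * hsum - α * hprod)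

theorem quadratic_vieta {R : Type*} [CommRing R] [IsDomain R] {a b c x y : R}
    (hx : a * x ^ 2 + b * x + c = 0) (hy : a * y ^ 2 + b * y + c = 0) (hxy : x ≠ y) :
    a * (x + y) = -b ∧ a * (x * y) = c := by
  have hsum : a * (x + y) = -b := by
    have h : (x - y) * (a * (x + y) + b) = 0 := by linear_combination hx - hy
    linear_combination (mul_eq_zero.mp h).resolve_left (sub_ne_zero.mpr hxy)
  exact ⟨hsum, by linear_combination x * hsum - hx⟩

theorem Ideal.span_eq_top_of_forall_dvd_isUnit {R : Type*} [CommRing R]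
    [IsPrincipalIdealRing R] {s : Set R} (hs : ∀ d : R, (∀ x ∈ s, d ∣ x) → IsUnit d) :
    Ideal.span s = ⊤ := by
  obtain ⟨g, hg⟩ := (IsPrincipalIdealRing.principal (Ideal.span s)).principal
  replace hg : Ideal.span s = Ideal.span {g} := hg
  have hdvd : ∀ x ∈ s, g ∣ x := fun x hx ↦
    Ideal.mem_span_singleton.mp (hg ▸ Ideal.subset_span hx)
  rw [hg, Ideal.span_singleton_eq_top]
  exact hs g hdvd

open IntermediateField in
theorem AlgEquiv.apply_ne_self_of_finrank_eq_two {F K : Type*} [Field F] [Field K]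
    [Algebra F K] (hK : Module.finrank F K = 2) {σ : K ≃ₐ[F] K} (hσ : σ ≠ AlgEquiv.refl)
    {x : K} (hx : x ∉ (⊥ : IntermediateField F K)) : σ x ≠ x := by
  have : FiniteDimensional F K := Module.finite_of_finrank_eq_succ hK
  have hxK : F⟮x⟯ = ⊤ :=
    ((isSimpleOrder_of_finrank_prime F K (hK ▸ Nat.prime_two)).eq_bot_or_eq_top _).resolve_left
      (mt adjoin_simple_eq_bot_iff.mp hx)
  intro hσx
  refine hσ (AlgEquiv.coe_toAlgHom_injective ?_)
  exact AlgHom.ext_of_adjoin_eq_top (Algebra.adjoin_eq_top_of_primitive_element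
    (Algebra.IsAlgebraic.isAlgebraic x) hxK) (by simpa using hσx)

theorem notMem_bot_of_im_pos {F K : Type*} [Field F] [Field K] [Algebra F K]
    {τ : F →+* ℝ} {σ : K →+* ℂ}
    (hcompat : ∀ x : F, σ (algebraMap F K x) = (τ x : ℂ)) {x : K} (hx : 0 < (σ x).im) :
    x ∉ (⊥ : IntermediateField F K) := by
  rintro ⟨y, rfl⟩
  simp [hcompat] at hx

section

variable {F K : Type} [Field F] [Field K] [NumberField F] [Algebra F K]

theorem iota_eq_algebraMap (u : 𝓞 F) : iota F K u = algebraMap (𝓞 F) K u := rfl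

theorem isIntegral_iota (u : 𝓞 F) : IsIntegral ℤ (iota F K u) :=
  (RingOfIntegers.isIntegral_coe u).map (algebraMap F K).toIntAlgHom

@[simp]
theorem AlgEquiv.apply_iota (f : K ≃ₐ[F] K) (u : 𝓞 F) : f (iota F K u) = iota F K u :=
  f.commutes _

variable [NumberField K] {a b c : 𝓞 F} {ω ω' : K}
  {I J : FractionalIdeal (nonZeroDivisors (𝓞 K)) K}

theorem mem_conj_iff (conj : K ≃ₐ[F] K)
    (hI : ∀ x : K, x ∈ (I : Submodule (𝓞 K) K) ↔
      ∃ u v : 𝓞 F, x = iota F K u * ω + iota F K v)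
    (hJ : ∀ x : K, x ∈ (J : Submodule (𝓞 K) K) ↔
      ∃ y : K, y ∈ (I : Submodule (𝓞 K) K) ∧ x = conj y) :
    ∀ x : K, x ∈ (J : Submodule (𝓞 K) K) ↔
      ∃ u v : 𝓞 F, x = iota F K u * conj ω + iota F K v := by
  intro x
  simp only [hJ, hI]
  constructor
  · rintro ⟨_, ⟨u, v, rfl⟩, rfl⟩
    exact ⟨u, v, by simp⟩
  · rintro ⟨u, v, rfl⟩
    exact ⟨_, ⟨u, v, rfl⟩, by simp⟩

theorem spanSingleton_mul_mul_le_one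
    (hI : ∀ x : K, x ∈ (I : Submodule (𝓞 K) K) ↔
      ∃ u v : 𝓞 F, x = iota F K u * ω + iota F K v)
    (hJ : ∀ x : K, x ∈ (J : Submodule (𝓞 K) K) ↔
      ∃ u v : 𝓞 F, x = iota F K u * ω' + iota F K v)
    (hsum : iota F K a * (ω + ω') = -iota F K b) (hprod : iota F K a * (ω * ω') = iota F K c) :
    FractionalIdeal.spanSingleton (nonZeroDivisors (𝓞 K)) (iota F K a) * I * J ≤ 1 := by
  have hAω : IsIntegral ℤ (iota F K a * ω) :=
    .mul_of_vieta (isIntegral_iota a) (isIntegral_iota b) (isIntegral_iota c) hsum hprod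
  have hAω' : IsIntegral ℤ (iota F K a * ω') :=
    .mul_of_vieta (isIntegral_iota a) (isIntegral_iota b) (isIntegral_iota c)
      (by rwa [add_comm]) (by rwa [mul_comm ω'])
  rw [FractionalIdeal.mul_le]
  intro z hz y hy
  obtain ⟨x, hx, rfl⟩ := FractionalIdeal.mem_singleton_mul.mp hz
  obtain ⟨u, v, rfl⟩ := (hI x).mp hx
  obtain ⟨u', v', rfl⟩ := (hJ y).mp hy
  have hexpand : iota F K a * (iota F K u * ω + iota F K v) * (iota F K u' * ω' + iota F K v')
      = iota F K u * iota F K u' * iota F K c + iota F K u * iota F K v' * (iota F K a * ω)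
        + iota F K v * iota F K u' * (iota F K a * ω') + iota F K v * iota F K v' * iota F K a := by
    linear_combination iota F K u * iota F K u' * hprod
  have hint := isIntegral_iota (F := F) (K := K)
  refine (FractionalIdeal.mem_one_iff _).mpr ⟨⟨_, ?_⟩, hexpand.symm⟩
  exact ((((hint u).mul (hint u')).mul (hint c)).add (((hint u).mul (hint v')).mul hAω)).add
    (((hint v).mul (hint u')).mul hAω') |>.add (((hint v).mul (hint v')).mul (hint a))

theorem one_le_spanSingleton_mul_mul [IsPrincipalIdealRing (𝓞 F)]
    (hprim : ∀ d : 𝓞 F, d ∣ a → d ∣ b → d ∣ c → IsUnit d)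
    (hI : ∀ x : K, x ∈ (I : Submodule (𝓞 K) K) ↔
      ∃ u v : 𝓞 F, x = iota F K u * ω + iota F K v)
    (hJ : ∀ x : K, x ∈ (J : Submodule (𝓞 K) K) ↔
      ∃ u v : 𝓞 F, x = iota F K u * ω' + iota F K v)
    (hsum : iota F K a * (ω + ω') = -iota F K b) (hprod : iota F K a * (ω * ω') = iota F K c) :
    1 ≤ FractionalIdeal.spanSingleton (nonZeroDivisors (𝓞 K)) (iota F K a) * I * J := by
  set P := FractionalIdeal.spanSingleton (nonZeroDivisors (𝓞 K)) (iota F K a) * I * J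
  let P' := (P : Submodule (𝓞 K) K).restrictScalars (𝓞 F)
  have hmem : ∀ x y : K, x ∈ I → y ∈ J → iota F K a * x * y ∈ P' := fun x y hx hy ↦
    FractionalIdeal.mul_mem_mul (FractionalIdeal.mul_mem_mul
      (FractionalIdeal.mem_spanSingleton_self _ _) hx) hy
  have hωI : ω ∈ I := (hI ω).mpr ⟨1, 0, by simp [iota]⟩
  have h1I : (1 : K) ∈ I := (hI 1).mpr ⟨0, 1, by simp [iota]⟩
  have hω'J : ω' ∈ J := (hJ ω').mpr ⟨1, 0, by simp [iota]⟩
  have h1J : (1 : K) ∈ J := (hJ 1).mpr ⟨0, 1, by simp [iota]⟩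
  have haP : iota F K a ∈ P' := by simpa only [mul_one] using hmem 1 1 h1I h1J
  have hbP : iota F K b ∈ P' := by
    rw [show iota F K b = -(iota F K a * ω * 1) - iota F K a * 1 * ω' by
      linear_combination hsum]
    exact sub_mem (neg_mem (hmem ω 1 hωI h1J)) (hmem 1 ω' h1I hω'J)
  have hcP : iota F K c ∈ P' := by simpa only [mul_assoc, hprod] using hmem ω ω' hωI hω'J
  have hspan : Ideal.span {a, b, c} = ⊤ := Ideal.span_eq_top_of_forall_dvd_isUnit fun d hd ↦
    hprim d (hd a (by simp)) (hd b (by simp)) (hd c (by simp))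
  obtain ⟨u, v, w, huvw⟩ := Submodule.mem_span_triple.mp ((Ideal.eq_top_iff_one _).mp hspan)
  have h1 : u • iota F K a + v • iota F K b + w • iota F K c = 1 := by
    simpa [iota_eq_algebraMap, Algebra.smul_def] using congrArg (algebraMap (𝓞 F) K) huvw
  rw [FractionalIdeal.one_le, ← h1]
  exact show _ ∈ P' from
    add_mem (add_mem (P'.smul_mem u haP) (P'.smul_mem v hbP)) (P'.smul_mem w hcP)

end

theorem stmt6_general (F K : Type) [Field F] [Field K] [NumberField F] [NumberField K]
    [Algebra F K] (τ : F →+* ℝ) (σ : K →+* ℂ)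
    (hcompat : ∀ x : F, σ (algebraMap F K x) = (τ x : ℂ))
    (hquadratic : Module.finrank F K = 2)
    (hclass : NumberField.classNumber F = 1)
    (dK : 𝓞 F)
    -- conj : the nontrivial automorphism of K/F (complex conjugation)
    (conj : K ≃ₐ[F] K) (hconj : conj ≠ AlgEquiv.refl)
    (a b c : 𝓞 F) (hQ : IsFormN F τ 1 dK a b c)
    (ω : K) (hω : IsFormRoot F K σ a b c ω)
    -- I is the fractional ideal 𝔞 = O_F·ω_Q + O_F, J its conjugate
    (I J : FractionalIdeal (nonZeroDivisors (𝓞 K)) K)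
    (hI : ∀ x : K, x ∈ (I : Submodule (𝓞 K) K) ↔
      ∃ u v : 𝓞 F, x = iota F K u * ω + iota F K v)
    (hJ : ∀ x : K, x ∈ (J : Submodule (𝓞 K) K) ↔
      ∃ y : K, y ∈ (I : Submodule (𝓞 K) K) ∧ x = conj y) :
    FractionalIdeal.spanSingleton (nonZeroDivisors (𝓞 K)) (iota F K a) * I * J
      = 1 := by
  obtain ⟨hprim, -, -, -⟩ := hQ
  obtain ⟨hroot, him⟩ := hω
  have hroot' : iota F K a * conj ω ^ 2 + iota F K b * conj ω + iota F K c = 0 := by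
    simpa using congrArg conj hroot
  have hconjω : ω ≠ conj ω :=
    (conj.apply_ne_self_of_finrank_eq_two hquadratic hconj (notMem_bot_of_im_pos hcompat him)).symm
  obtain ⟨hsum, hprod⟩ := quadratic_vieta hroot hroot' hconjω
  have hJ' := mem_conj_iff conj hI hJ
  have : IsPrincipalIdealRing (𝓞 F) := classNumber_eq_one_iff.mp hclass
  exact le_antisymm (spanSingleton_mul_mul_le_one hI hJ' hsum hprod)
    (one_le_spanSingleton_mul_mul hprim hI hJ' hsum hprod)

theorem stmt6 (F K : Type) [Field F] [Field K] [NumberField F] [NumberField K]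
    [Algebra F K] (τ : F →+* ℝ) (σ : K →+* ℂ)
    (hcompat : ∀ x : F, σ (algebraMap F K x) = (τ x : ℂ))
    (hF_totallyReal : ∀ φ : F →+* ℂ, ∀ x : F, (φ x).im = 0)
    (hquadratic : Module.finrank F K = 2)
    (hclass : NumberField.classNumber F = 1)
    (ωK : K) (hωKint : IsIntegral ℤ ωK) (hωKim : 0 < (σ ωK).im)
    (hgen : ∀ x : 𝓞 K, ∃ u v : 𝓞 F, (x : K) = iota F K u * ωK + iota F K v)
    (bK cK : 𝓞 F) (hmin : ωK ^ 2 + iota F K bK * ωK + iota F K cK = 0)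
    (dK : 𝓞 F) (hdK : dK = bK ^ 2 - 4 * cK)
    -- conj : the nontrivial automorphism of K/F (complex conjugation)
    (conj : K ≃ₐ[F] K) (hconj : conj ≠ AlgEquiv.refl)
    (a b c : 𝓞 F) (hQ : IsFormN F τ 1 dK a b c)
    (ω : K) (hω : IsFormRoot F K σ a b c ω)
    -- I is the fractional ideal 𝔞 = O_F·ω_Q + O_F, J its conjugate
    (I J : FractionalIdeal (nonZeroDivisors (𝓞 K)) K)
    (hI : ∀ x : K, x ∈ (I : Submodule (𝓞 K) K) ↔
      ∃ u v : 𝓞 F, x = iota F K u * ω + iota F K v)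
    (hJ : ∀ x : K, x ∈ (J : Submodule (𝓞 K) K) ↔
      ∃ y : K, y ∈ (I : Submodule (𝓞 K) K) ∧ x = conj y) :
    FractionalIdeal.spanSingleton (nonZeroDivisors (𝓞 K)) (iota F K a) * I * J
      = 1 :=
  stmt6_general F K τ σ hcompat hquadratic hclass dK conj hconj a b c hQ ω hω I J hI hJ
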